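/- For minimum normality: for every ε > 0 and all sufficiently large N, every binary sequence E_N ∈ {-1,1}^N satisfies 𝒩(E_N) ≥ (1/2 − ε)·log₂ N. (Lower bound half of the Alon–Kohayakawa–Mauduit–Moreira–Rödl estimate.) -/

import Mathlib

/-!
Let `K = ⌊log₂ N⌋`, `t = ⌊log₂ K⌋`, `k = t + 1` and `j = K - t - 2`. If the constant word of
length `j` does not occur in the first `N + 1 - j` positions, its count is `0` while its expected
count `(N + 1 - j) / 2 ^ j` exceeds `K + 1`. If it occurs at `p`, the constant word of length `k`
occurs at each of the `j - k + 1` consecutive positions `p, …, p + j - k`, so its deviation grows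
by `(j - k + 1)(1 - 2⁻ᵏ) ≥ j - k` from `M = p` to `M = p + j - k + 1`; one of the two deviations
is then at least `(j - k) / 2 = K / 2 - O(log K)` in absolute value.
-/

def patCount (e : ℕ → Bool) (M : ℕ) {k : ℕ} (X : Fin k → Bool) : ℕ :=
  ((Finset.range M).filter (fun n => ∀ i : Fin k, e (n + i) = X i)).card

open Filter

def OccursAt (e : ℕ → Bool) {k : ℕ} (X : Fin k → Bool) (n : ℕ) : Prop :=
  ∀ i : Fin k, e (n + i) = X i

noncomputable def patDeviation (e : ℕ → Bool) (M : ℕ) {k : ℕ} (X : Fin k → Bool) : ℝ :=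
  patCount e M X - M / 2 ^ k

section Patterns

variable (e : ℕ → Bool) {k : ℕ} (X : Fin k → Bool)

theorem patCount_eq_zero_of_forall_not_occursAt {M : ℕ} (h : ∀ n < M, ¬ OccursAt e X n) :
    patCount e M X = 0 := by
  rw [patCount, Finset.card_eq_zero, Finset.filter_eq_empty_iff]
  exact fun n hn => h n (Finset.mem_range.mp hn)

theorem patCount_add_of_forall_occursAt {a d : ℕ} (h : ∀ n < d, OccursAt e X (a + n)) :
    patCount e (a + d) X = patCount e a X + d := by
  simp only [patCount, Finset.card_filter, Finset.sum_range_add]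
  congr 1
  exact (Finset.sum_congr rfl fun n hn => if_pos (h n (Finset.mem_range.mp hn))).trans (by simp)

theorem patDeviation_zero : patDeviation e 0 X = 0 := by
  simp [patDeviation, patCount]

theorem patDeviation_add_of_forall_occursAt {a d : ℕ} (h : ∀ n < d, OccursAt e X (a + n)) :
    patDeviation e (a + d) X = patDeviation e a X + (d - d / 2 ^ k) := by
  simp only [patDeviation, patCount_add_of_forall_occursAt e X h]
  push_cast
  ring

theorem exists_abs_patDeviation_ge_of_forall_occursAt {a d : ℕ} (hd : 0 < d)
    (h : ∀ n < d, OccursAt e X (a + n)) :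
    ∃ M, 1 ≤ M ∧ M ≤ a + d ∧ (d - d / 2 ^ k) / 2 ≤ |patDeviation e M X| := by
  by_cases hlarge : (d - d / 2 ^ k) / 2 ≤ |patDeviation e (a + d) X|
  · exact ⟨a + d, by omega, le_rfl, hlarge⟩
  have hgap := patDeviation_add_of_forall_occursAt e X h
  have ha : (d - d / 2 ^ k) / 2 ≤ |patDeviation e a X| := by
    cases abs_cases (patDeviation e a X) <;> cases abs_cases (patDeviation e (a + d) X) <;>
      linarith
  refine ⟨a, Nat.one_le_iff_ne_zero.mpr ?_, by omega, ha⟩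
  rintro rfl
  rw [patDeviation_zero, abs_zero] at ha
  exact hlarge (by linarith [abs_nonneg (patDeviation e (0 + d) X)])

end Patterns

theorem OccursAt.const_of_le {e : ℕ → Bool} {b : Bool} {j k p n : ℕ}
    (h : OccursAt e (fun _ : Fin j => b) p) (hn : n + k ≤ j) :
    OccursAt e (fun _ : Fin k => b) (p + n) := fun i => by
  simpa [add_assoc] using h ⟨n + i, by omega⟩

theorem exists_abs_patDeviation_ge (e : ℕ → Bool) (b : Bool) {N j k : ℕ} (T : ℝ)
    (hkj : k ≤ j) (hjN : j ≤ N) (hjk : j < 2 ^ k) (hA : T ≤ ((N + 1 - j : ℕ) : ℝ) / 2 ^ j)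
    (hB : T ≤ ((j : ℝ) - k) / 2) :
    ∃ (k' M : ℕ) (X : Fin k' → Bool),
      k ≤ k' ∧ k' ≤ j ∧ 1 ≤ M ∧ M + k' ≤ N + 1 ∧ T ≤ |patDeviation e M X| := by
  by_cases hocc : ∃ p < N + 1 - j, OccursAt e (fun _ : Fin j => b) p
  · obtain ⟨p, hp, hpj⟩ := hocc
    obtain ⟨M, hM, hMp, hdev⟩ := exists_abs_patDeviation_ge_of_forall_occursAt e
      (fun _ : Fin k => b) (Nat.succ_pos (j - k)) fun n hn => hpj.const_of_le (by omega)
    have hrun : ((j : ℝ) - k) / 2 ≤ (((j - k + 1 : ℕ) : ℝ) - (j - k + 1 : ℕ) / 2 ^ k) / 2 := by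
      have : ((j - k + 1 : ℕ) : ℝ) / 2 ^ k ≤ 1 := by
        rw [div_le_one (by positivity)]
        exact_mod_cast (by omega : j - k + 1 ≤ 2 ^ k)
      rw [Nat.cast_add_one, Nat.cast_sub hkj] at this ⊢
      linarith
    exact ⟨k, M, _, le_rfl, hkj, hM, by omega, hB.trans (hrun.trans hdev)⟩
  · push Not at hocc
    refine ⟨j, N + 1 - j, fun _ => b, hkj, le_rfl, by omega, by omega, ?_⟩
    rw [patDeviation, patCount_eq_zero_of_forall_not_occursAt e _ hocc, Nat.cast_zero, zero_sub,
      abs_neg, abs_of_nonneg (by positivity)]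
    exact hA

theorem logb_natCast_lt_natLog_add_one (b n : ℕ) : Real.logb b n < Nat.log b n + 1 := by
  rw [← Real.natFloor_logb_natCast]
  exact Nat.lt_floor_add_one _

theorem eventually_natLog_add_two_le_mul {ε : ℝ} (hε : 0 < ε) :
    ∀ᶠ K : ℕ in atTop, (Nat.log 2 K : ℝ) + 2 ≤ ε * K := by
  have hlog2 : 0 < Real.log 2 := Real.log_pos one_lt_two
  filter_upwards
    [Real.isLittleO_log_id_atTop.natCast_atTop.def (by positivity : 0 < ε * Real.log 2 / 2),
      tendsto_natCast_atTop_atTop.eventually_ge_atTop (4 / ε)] with K hlog hK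
  have hKpos : (0 : ℝ) ≤ K := K.cast_nonneg
  have ht : (Nat.log 2 K : ℝ) * Real.log 2 ≤ Real.log K := by
    have := Real.natLog_le_logb K 2
    rw [Nat.cast_ofNat, Real.logb, le_div_iff₀ hlog2] at this
    exact this
  rw [Real.norm_eq_abs, Real.norm_eq_abs, id, abs_of_nonneg hKpos] at hlog
  have h4 : 4 ≤ ε * K := by rwa [div_le_iff₀' hε] at hK
  nlinarith [le_abs_self (Real.log K)]

theorem succ_le_natSub_div_two_pow {K t j N : ℕ} (hKt : K < 2 ^ (t + 1)) (hj : j + t + 2 ≤ K)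
    (hKN : 2 ^ K ≤ N) : (K + 1 : ℝ) ≤ ((N + 1 - j : ℕ) : ℝ) / 2 ^ j := by
  have h1 : 2 ^ j * (K + 1) ≤ 2 ^ (j + t + 1) := by
    rw [add_assoc, pow_add]
    exact Nat.mul_le_mul_left _ hKt
  have h2 : j ≤ 2 ^ (j + t + 1) :=
    Nat.lt_two_pow_self.le.trans (Nat.pow_le_pow_right two_pos (by omega))
  have h3 : 2 ^ (j + t + 2) ≤ 2 ^ K := Nat.pow_le_pow_right two_pos hj
  rw [pow_succ] at h3
  rw [le_div_iff₀ (by positivity), mul_comm]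
  exact_mod_cast (by omega : 2 ^ j * (K + 1) ≤ N + 1 - j)

/-- For every `ε > 0` and all sufficiently large `N`, every binary sequence of
length `N` has normality measure at least `(1/2 − ε) log₂ N`: there is an
admissible `(k, X, M)` witnessing `|T(E_N,M,X) − M/2^k| ≥ (1/2 − ε) log₂ N`. -/
theorem stmt17 (ε : ℝ) (hε : 0 < ε) :
    ∃ N₀ : ℕ, ∀ N ≥ N₀, ∀ e : ℕ → Bool,
      ∃ (k M : ℕ) (X : Fin k → Bool),
        1 ≤ k ∧ (k : ℝ) ≤ Real.logb 2 N ∧ 1 ≤ M ∧ M + k ≤ N + 1 ∧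
        (1 / 2 - ε) * Real.logb 2 N ≤ |(patCount e M X : ℝ) - (M : ℝ) / 2 ^ k| := by
  obtain ⟨K₀, hK₀⟩ := eventually_atTop.mp
    ((eventually_natLog_add_two_le_mul hε).and (eventually_natLog_add_two_le_mul one_half_pos))
  refine ⟨2 ^ K₀, fun N hN e => ?_⟩
  have hN0 : N ≠ 0 := ((Nat.two_pow_pos K₀).trans_le hN).ne'
  have hpowK := Nat.pow_log_le_self 2 hN0
  have hKN := Nat.log_le_self 2 N
  have hKL : (Nat.log 2 N : ℝ) ≤ Real.logb 2 N := by exact_mod_cast Real.natLog_le_logb N 2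
  have hLK : Real.logb 2 N < Nat.log 2 N + 1 := by
    exact_mod_cast logb_natCast_lt_natLog_add_one 2 N
  obtain ⟨hεK, hhalfK⟩ := hK₀ _ (Nat.le_log_of_pow_le one_lt_two hN)
  have hKt := Nat.lt_pow_succ_log_self one_lt_two (Nat.log 2 N)
  generalize Nat.log 2 (Nat.log 2 N) = t at hεK hhalfK hKt
  generalize Nat.log 2 N = K at *
  have htK : 2 * t + 4 ≤ K := by exact_mod_cast (by linarith : (2 * t + 4 : ℝ) ≤ K)
  obtain ⟨j, rfl⟩ : ∃ j, K = j + t + 2 := ⟨K - t - 2, by omega⟩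
  have hT : (1 / 2 - ε) * Real.logb 2 N ≤ (j + t + 2 : ℕ) + 1 := by nlinarith
  obtain ⟨k, M, X, htk, hkj, hM, hMN, hdev⟩ := exists_abs_patDeviation_ge e false (k := t + 1) _
    (by omega) (by omega) (by omega) (hT.trans (succ_le_natSub_div_two_pow hKt le_rfl hpowK))
    (by push_cast at hεK hKL hLK ⊢; nlinarith)
  exact ⟨k, M, X, by omega, le_trans (by exact_mod_cast (by omega : k ≤ j + t + 2)) hKL,
    hM, hMN, hdev⟩
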